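/- Let H₁ = [[f₁,u₁],[g₁,v₁]] and H₂ = [[f₂,u₂],[g₂,v₂]] with all entries in L^∞. The following are equivalent: (1) the product R_{H₁}R_{H₂} is a generalized Cauchy singular integral operator (equals R_K for some K ∈ L^∞_{2×2}); (2) the rank-one operator identity ( V((conj(f₁))₋), (g₁)₋ ) ⊗ ( V((f₂)₋), (conj(u₂))₋ ) = ( V((conj(u₁))₋), (v₁)₋ ) ⊗ ( V((g₂)₋), (conj(v₂))₋ ) holds on L² ⊕ L²; (3) one of the following holds: (3.1) [conj(f₁), g₁ ∈ H^∞ or f₂, conj(u₂) ∈ H^∞] and [conj(u₁), v₁ ∈ H^∞ or g₂, conj(v₂) ∈ H^∞]; (3.2) if (3.1) does not happen, there exists a nonzero constant λ such that conj(f₁) − conj(λ)·conj(u₁), g₁ − λv₁, g₂ − λf₂, and conj(v₂) − conj(λ)·conj(u₂) all lie in H^∞. -/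

import Mathlib

noncomputable section

open MeasureTheory Complex ComplexConjugate InnerProductSpace ContinuousLinearMap

namespace GSIO

instance : Fact (0 < 2 * Real.pi) := ⟨by positivity⟩

/-- The circle, modeled as `ℝ / 2πℤ`. -/
abbrev Circ : Type := AddCircle (2 * Real.pi)

/-- Normalized Haar (arc-length) measure on the circle. -/
abbrev μC : Measure Circ := AddCircle.haarAddCircle

/-- `L²` of the circle. -/
abbrev L2 : Type := Lp ℂ 2 μC

/-- `L^∞` of the circle. -/
abbrev Linf : Type := Lp ℂ ⊤ μC

/-- The Hardy space `H²`: those `L²` functions whose negative Fourier coefficients vanish. -/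
def Hardy : Submodule ℂ L2 where
  carrier := {f : L2 | ∀ n : ℤ, n < 0 → fourierCoeff (f : Circ → ℂ) n = 0}
  zero_mem' := by
    intro n hn
    rw [← fourierBasis_repr]
    simp
  add_mem' := by
    intro a b ha hb n hn
    have ha' := ha n hn
    have hb' := hb n hn
    rw [← fourierBasis_repr] at ha' hb' ⊢
    rw [map_add, lp.coeFn_add, Pi.add_apply, ha', hb', add_zero]
  smul_mem' := by
    intro c a ha n hn
    have ha' := ha n hn
    rw [← fourierBasis_repr] at ha' ⊢
    rw [_root_.map_smul, lp.coeFn_smul, Pi.smul_apply, ha', smul_zero]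

theorem isClosed_Hardy : IsClosed (Hardy : Set L2) := by
  have h : (Hardy : Set L2) =
      ⋂ n : {m : ℤ // m < 0}, (fun f : L2 =>
        (innerSL ℂ (fourierBasis (T := 2 * Real.pi) n.1)) f) ⁻¹' {0} := by
    ext f
    simp only [Set.mem_iInter, Set.mem_preimage, Set.mem_singleton_iff, SetLike.mem_coe]
    constructor
    · intro hf n
      have h1 := hf n.1 n.2
      rw [← fourierBasis_repr, fourierBasis.repr_apply_apply] at h1
      simpa using h1
    · intro hf n hn
      have h1 := hf ⟨n, hn⟩
      rw [← fourierBasis_repr, fourierBasis.repr_apply_apply]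
      simpa using h1
  rw [h]
  exact isClosed_iInter fun n =>
    isClosed_singleton.preimage (innerSL ℂ _).continuous

instance : CompleteSpace Hardy := isClosed_Hardy.completeSpace_coe

/-- The Riesz projection `P₊`, i.e. the orthogonal projection of `L²` onto `H²`. -/
def Pp : L2 →L[ℂ] L2 := Hardy.subtypeL.comp (Hardy.orthogonalProjectionOnto)

/-- `P₋ = I − P₊`. -/
def Pm : L2 →L[ℂ] L2 := ContinuousLinearMap.id ℂ L2 - Pp

/-- The pointwise product of an `L^∞` function with an `L²` function, as an `L²` function. -/
def mulFun (φ : Linf) (x : L2) : L2 :=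
  ((Lp.memLp x).smul (r := 2) (Lp.memLp φ)).toLp ((φ : Circ → ℂ) • (x : Circ → ℂ))

theorem mulFun_add (φ : Linf) (x y : L2) : mulFun φ (x + y) = mulFun φ x + mulFun φ y := by
  rw [mulFun, mulFun, mulFun, ← MemLp.toLp_add]
  apply MemLp.toLp_congr
  filter_upwards [Lp.coeFn_add x y] with t ht
  have ht' : ((x + y : L2) : Circ → ℂ) t = (x : Circ → ℂ) t + (y : Circ → ℂ) t := by
    simpa using ht
  simp only [Pi.mul_apply, Pi.smul_apply, Pi.add_apply, smul_eq_mul, ht']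
  ring

theorem mulFun_smul (c : ℂ) (φ : Linf) (x : L2) : mulFun φ (c • x) = c • mulFun φ x := by
  rw [mulFun, mulFun, ← MemLp.toLp_const_smul]
  apply MemLp.toLp_congr
  filter_upwards [Lp.coeFn_smul c x] with t ht
  have ht' : ((c • x : L2) : Circ → ℂ) t = c * (x : Circ → ℂ) t := by
    simpa using ht
  simp only [Pi.mul_apply, Pi.smul_apply, smul_eq_mul, ht']
  ring

theorem norm_mulFun_le (φ : Linf) (x : L2) : ‖mulFun φ x‖ ≤ ‖φ‖ * ‖x‖ := by
  rw [mulFun, Lp.norm_toLp]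
  have h := eLpNorm_smul_le_eLpNorm_top_mul_eLpNorm (μ := μC) 2
    (Lp.aestronglyMeasurable x) (φ : Circ → ℂ)
  refine le_trans (ENNReal.toReal_mono ?_ h) ?_
  · exact ENNReal.mul_ne_top (Lp.eLpNorm_ne_top φ) (Lp.eLpNorm_ne_top x)
  · rw [ENNReal.toReal_mul, Lp.norm_def, Lp.norm_def]

/-- The multiplication operator `M_φ` on `L²`, for `φ ∈ L^∞`. -/
def mul (φ : Linf) : L2 →L[ℂ] L2 :=
  LinearMap.mkContinuous
    { toFun := mulFun φ
      map_add' := mulFun_add φ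
      map_smul' := fun c x => mulFun_smul c φ x }
    ‖φ‖ (fun x => norm_mulFun_le φ x)

/-- Pointwise product in `L^∞`. -/
def mulInf (φ ψ : Linf) : Linf :=
  ((Lp.memLp ψ).smul (r := ⊤) (Lp.memLp φ)).toLp ((φ : Circ → ℂ) • (ψ : Circ → ℂ))

/-- Complex conjugation on `L^∞`. -/
def conjInf (φ : Linf) : Linf :=
  (show MemLp (fun t => star ((φ : Circ → ℂ) t)) ⊤ μC from
    ⟨continuous_star.comp_aestronglyMeasurable (Lp.aestronglyMeasurable φ), by
      rw [eLpNorm_congr_norm_ae (g := (φ : Circ → ℂ))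
        (Filter.Eventually.of_forall fun t => norm_star _)]
      exact Lp.eLpNorm_lt_top φ⟩).toLp _

/-- Complex conjugation on `L²`. -/
def conjL2 (x : L2) : L2 :=
  (show MemLp (fun t => star ((x : Circ → ℂ) t)) 2 μC from
    ⟨continuous_star.comp_aestronglyMeasurable (Lp.aestronglyMeasurable x), by
      rw [eLpNorm_congr_norm_ae (g := (x : Circ → ℂ))
        (Filter.Eventually.of_forall fun t => norm_star _)]
      exact Lp.eLpNorm_lt_top x⟩).toLp _

/-- The inclusion `L^∞ ⊆ L²` (the measure is finite). -/
def toL2 (φ : Linf) : L2 := ((Lp.memLp φ).mono_exponent le_top).toLp φ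

/-- The constant function `c` as an element of `L^∞`. -/
def constInf (c : ℂ) : Linf := (memLp_const c).toLp (fun _ => c)

/-- An `L^∞` function is constant (a.e.). -/
def IsConst (φ : Linf) : Prop := ∃ c : ℂ, φ = constInf c

/-- `φ ∈ H^∞ = L^∞ ∩ H²`: the negative Fourier coefficients of `φ` vanish. -/
def MemHinf (φ : Linf) : Prop := ∀ n : ℤ, n < 0 → fourierCoeff (φ : Circ → ℂ) n = 0

/-- The coordinate function `z` as an element of `L^∞`. -/
def zInf : Linf := fourierLp (T := 2 * Real.pi) ⊤ 1

/-- The function `z̄` as an element of `L^∞`. -/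
def zbarInf : Linf := fourierLp (T := 2 * Real.pi) ⊤ (-1)

/-- The antiunitary operator `V : h ↦ z̄ ⬝ conj h` on `L²`. -/
def Vmap (x : L2) : L2 := mul zbarInf (conjL2 x)

/-- `φ₋ = P₋ φ` for `φ ∈ L^∞`, viewed inside `L²`. -/
def mI (φ : Linf) : L2 := Pm (toL2 φ)

/-- The rank-one operator `p ⊗ q : x ↦ ⟪x, q⟫ · p` (the inner product being conjugate-linear
in `q`). -/
def rankOne {E : Type*} [NormedAddCommGroup E] [InnerProductSpace ℂ E] (p q : E) : E →L[ℂ] E :=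
  (innerSL ℂ q).smulRight p

/-- The Hilbert space direct sum `L² ⊕ L²`. -/
abbrev L2sq : Type := WithLp 2 (L2 × L2)

/-- A pair of `L²` functions, viewed as a vector in `L² ⊕ L²`. -/
def pair (x y : L2) : L2sq := (WithLp.equiv 2 (L2 × L2)).symm (x, y)

/-- Notation for the pointwise product in `L^∞`. -/
scoped infixl:70 " ⊙ " => GSIO.mulInf

/-- The Toeplitz operator `T_φ = P₊ M_φ P₊` (viewed as acting on the corner `H²` of `L²`). -/
def Toeplitz (φ : Linf) : L2 →L[ℂ] L2 := Pp ∘L mul φ ∘L Pp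

/-- The Hankel operator `H_φ = P₋ M_φ P₊ : H² → (H²)^⊥` (as a corner operator on `L²`). -/
def Hankel (φ : Linf) : L2 →L[ℂ] L2 := Pm ∘L mul φ ∘L Pp

/-- The dual Toeplitz operator `T̃_φ = P₋ M_φ P₋` on `(H²)^⊥` (as a corner operator on `L²`). -/
def dualToeplitz (φ : Linf) : L2 →L[ℂ] L2 := Pm ∘L mul φ ∘L Pm

/-- The generalized Cauchy singular integral operator with symbol `[[f, u], [g, v]]`:
`R x = P₊ f P₊ x + P₋ g P₊ x + P₊ u P₋ x + P₋ v P₋ x`. -/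
def Rop (f u g v : Linf) : L2 →L[ℂ] L2 :=
  Pp ∘L mul f ∘L Pp + Pm ∘L mul g ∘L Pp + Pp ∘L mul u ∘L Pm + Pm ∘L mul v ∘L Pm

/-- The singular integral operator `S_{f,g} = M_f P₊ + M_g P₋` on `L²`. -/
def Sop (f g : Linf) : L2 →L[ℂ] L2 := mul f ∘L Pp + mul g ∘L Pm

/-- Negation `t ↦ -t` preserves the Haar measure of the circle. -/
theorem mp_neg : MeasurePreserving (fun t : Circ => -t) μC μC :=
  Measure.measurePreserving_neg μC

/-- Composition with `t ↦ -t` on `L²`. -/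
def reflL2 : L2 →L[ℂ] L2 :=
  (Lp.compMeasurePreservingₗᵢ ℂ (fun t : Circ => -t) mp_neg).toContinuousLinearMap

/-- Composition with `t ↦ -t` on `L^∞`: for `φ ∈ L^∞`, `φ̃(z) = φ(z̄)`. -/
def reflInf (φ : Linf) : Linf := Lp.compMeasurePreserving (fun t : Circ => -t) mp_neg φ

/-- `φ* (z) = conj (φ(z̄))`. -/
def starInf (φ : Linf) : Linf := conjInf (reflInf φ)

/-- The flip operator `J : (Jh)(z) = z̄ · h(z̄)` on `L²`. -/
def Jop : L2 →L[ℂ] L2 := mul zbarInf ∘L reflL2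

/-- The Hankel operator `𝕳_φ = P₊ M_φ J` on `H²` (as a corner operator on `L²`). -/
def HankelPlus (φ : Linf) : L2 →L[ℂ] L2 := Pp ∘L mul φ ∘L Jop ∘L Pp

/-- The adjoint `H*_φ` of the Hankel operator `H_φ`. -/
def HankelAdj (φ : Linf) : L2 →L[ℂ] L2 := ContinuousLinearMap.adjoint (Hankel φ)

/-- `θ ∈ L^∞` is an inner function: `θ ∈ H^∞` and `|θ| = 1` a.e. -/
def IsInner (θ : Linf) : Prop := MemHinf θ ∧ ∀ᵐ t ∂μC, ‖(θ : Circ → ℂ) t‖ = 1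

/-- The orthogonal projection of `L²` onto `K_θ^⊥ = θH² ⊕ z̄·conj(H²)`, namely
`P₋ + M_θ P₊ M_{conj θ}`. -/
def Qproj (θ : Linf) : L2 →L[ℂ] L2 := Pm + mul θ ∘L Pp ∘L mul (conjInf θ)

/-!
The product `R_{H₁} R_{H₂}` is a GSIO exactly when each of its four corners `P (R_{H₁} R_{H₂}) Q`,
`P, Q ∈ {P₊, P₋}`, has the form `P M_w Q`. Since `M_a P₊ M_b = M_{ab} − M_a P₋ M_b`, each corner
condition says that a difference `P M_a R M_b Q − P M_c R M_d Q` of Hankel-type products is such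
a corner operator. Compressions by the shift `S = M_z` (`Y ↦ P S* Y S Q` or `P S Y S* Q` on the
diagonal corners, commutators with `S*` or `S` on the mixed ones) fix corner operators but change
`P M_a R M_b Q` by the rank-one operator `P M_a (e ⊗ e') M_b Q`, `e, e' ∈ {1, z̄}`; as
`P₊(z̄ a) = V((ā)₋)`, this yields the four entries of the rank-one identity (2). An identity
`p ⊗ q = p' ⊗ q'` forces either both sides to vanish or `p = λ p'`, `q' = λ̄ q`, which is (3).
Conversely, under (3.1) the relevant Hankel factors vanish and under (3.2) they are
proportional, and the corners are computed directly.
-/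

abbrev fourierL2 (n : ℤ) : L2 := fourierLp 2 n

def coeff (x : L2) (n : ℤ) : ℂ := fourierCoeff (x : Circ → ℂ) n

theorem coeff_eq_inner (x : L2) (n : ℤ) : coeff x n = ⟪fourierL2 n, x⟫_ℂ := by
  rw [coeff, ← fourierBasis_repr, fourierBasis.repr_apply_apply, coe_fourierBasis]

theorem ext_coeff {x y : L2} (h : ∀ n, coeff x n = coeff y n) : x = y :=
  fourierBasis.repr.injective <| lp.ext <| funext fun n => by
    simpa only [fourierBasis_repr, coeff] using h n

@[simp] theorem coeff_sub (x y : L2) (n : ℤ) : coeff (x - y) n = coeff x n - coeff y n := by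
  simp [coeff_eq_inner, inner_sub_right]

@[simp] theorem coeff_smul (c : ℂ) (x : L2) (n : ℤ) : coeff (c • x) n = c * coeff x n := by
  simp [coeff_eq_inner, inner_smul_right]

@[simp] theorem coeff_zero (n : ℤ) : coeff 0 n = 0 := by simp [coeff_eq_inner]

theorem coeff_fourierL2 (m n : ℤ) : coeff (fourierL2 m) n = if n = m then 1 else 0 := by
  simpa [coeff_eq_inner] using orthonormal_iff_ite.mp (orthonormal_fourier (T := 2 * Real.pi)) n m

theorem coeff_eq_integral (x : L2) (n : ℤ) :
    coeff x n = ∫ t, fourier (-n) t * (x : Circ → ℂ) t ∂μC := by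
  simp [coeff, fourierCoeff, smul_eq_mul]

theorem fourierL2_mem_Hardy {n : ℤ} (hn : 0 ≤ n) : fourierL2 n ∈ Hardy := fun k hk =>
  (coeff_fourierL2 n k).trans (if_neg (by omega))

theorem Pp_eq_starProjection : Pp = Hardy.starProjection := rfl

theorem Pm_eq_starProjection : Pm = Hardyᗮ.starProjection :=
  Hardy.starProjection_orthogonal.symm

theorem coeff_Pp (x : L2) (n : ℤ) : coeff (Pp x) n = if n < 0 then 0 else coeff x n := by
  split_ifs with hn
  · exact (Hardy.orthogonalProjectionOnto x).2 n hn
  · rw [coeff_eq_inner, coeff_eq_inner, Pp_eq_starProjection,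
      ← Submodule.inner_starProjection_left_eq_right,
      Submodule.starProjection_eq_self_iff.mpr (fourierL2_mem_Hardy (not_lt.mp hn))]

theorem coeff_Pm (x : L2) (n : ℤ) : coeff (Pm x) n = if n < 0 then coeff x n else 0 := by
  rw [show Pm x = x - Pp x from rfl, coeff_sub, coeff_Pp]
  split_ifs <;> ring

theorem coeFn_mul (φ : Linf) (x : L2) :
    (mul φ x : Circ → ℂ) =ᵐ[μC] fun t => (φ : Circ → ℂ) t * (x : Circ → ℂ) t :=
  MemLp.coeFn_toLp ((Lp.memLp x).smul (r := 2) (Lp.memLp φ))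

theorem coeFn_mulInf (φ ψ : Linf) :
    ((φ ⊙ ψ) : Circ → ℂ) =ᵐ[μC] fun t => (φ : Circ → ℂ) t * (ψ : Circ → ℂ) t :=
  MemLp.coeFn_toLp _

theorem coeFn_toL2 (φ : Linf) : (toL2 φ : Circ → ℂ) =ᵐ[μC] (φ : Circ → ℂ) :=
  MemLp.coeFn_toLp _

theorem coeFn_conjL2 (x : L2) :
    (conjL2 x : Circ → ℂ) =ᵐ[μC] fun t => conj ((x : Circ → ℂ) t) :=
  MemLp.coeFn_toLp _

theorem coeFn_conjInf (φ : Linf) :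
    (conjInf φ : Circ → ℂ) =ᵐ[μC] fun t => conj ((φ : Circ → ℂ) t) :=
  MemLp.coeFn_toLp _

theorem mul_mulInf (φ ψ : Linf) : mul (φ ⊙ ψ) = mul φ * mul ψ := by
  ext1 x
  refine Lp.ext ?_
  filter_upwards [coeFn_mul (φ ⊙ ψ) x, coeFn_mul φ (mul ψ x), coeFn_mul ψ x,
    coeFn_mulInf φ ψ] with t h₁ h₂ h₃ h₄
  rw [mul_apply_eq_comp, h₁, h₂, h₃, h₄, mul_assoc]

theorem mul_commute (φ ψ : Linf) : Commute (mul φ) (mul ψ) := by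
  have h : φ ⊙ ψ = ψ ⊙ φ := by
    refine Lp.ext ?_
    filter_upwards [coeFn_mulInf φ ψ, coeFn_mulInf ψ φ] with t h₁ h₂
    rw [h₁, h₂, mul_comm]
  rw [Commute, SemiconjBy, ← mul_mulInf, ← mul_mulInf, h]

theorem mul_add_symbol (φ ψ : Linf) : mul (φ + ψ) = mul φ + mul ψ := by
  ext1 x
  refine Lp.ext ?_
  filter_upwards [coeFn_mul (φ + ψ) x, coeFn_mul φ x, coeFn_mul ψ x, Lp.coeFn_add φ ψ,
    Lp.coeFn_add (mul φ x) (mul ψ x)] with t h₁ h₂ h₃ h₄ h₅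
  rw [add_apply, h₁, h₅, Pi.add_apply, h₂, h₃, h₄, Pi.add_apply, add_mul]

theorem mul_smul_symbol (c : ℂ) (φ : Linf) : mul (c • φ) = c • mul φ := by
  ext1 x
  refine Lp.ext ?_
  filter_upwards [coeFn_mul (c • φ) x, coeFn_mul φ x, Lp.coeFn_smul c φ,
    Lp.coeFn_smul c (mul φ x)] with t h₁ h₂ h₃ h₄
  rw [smul_apply, h₁, h₄, Pi.smul_apply, h₂, h₃, Pi.smul_apply,
    smul_eq_mul, smul_eq_mul, mul_assoc]

theorem mul_zero_symbol : mul 0 = 0 := by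
  simpa using mul_smul_symbol 0 0

theorem mul_sub_symbol (φ ψ : Linf) : mul (φ - ψ) = mul φ - mul ψ := by
  rw [eq_sub_iff_add_eq, ← mul_add_symbol, sub_add_cancel]

theorem adjoint_mul (φ : Linf) : adjoint (mul φ) = mul (conjInf φ) := by
  refine ((ContinuousLinearMap.eq_adjoint_iff _ _).mpr fun x y => ?_).symm
  rw [MeasureTheory.L2.inner_def, MeasureTheory.L2.inner_def]
  refine integral_congr_ae ?_
  filter_upwards [coeFn_mul (conjInf φ) x, coeFn_mul φ y, coeFn_conjInf φ] with t h₁ h₂ h₃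
  simp only [RCLike.inner_apply, h₁, h₂, h₃, map_mul, starRingEnd_self_apply]
  ring

theorem conjInf_conjInf (φ : Linf) : conjInf (conjInf φ) = φ := by
  refine Lp.ext ?_
  filter_upwards [coeFn_conjInf (conjInf φ), coeFn_conjInf φ] with t h₁ h₂
  rw [h₁, h₂, conj_conj]

theorem conjInf_sub_smul (c : ℂ) (φ ψ : Linf) :
    conjInf (φ - c • ψ) = conjInf φ - conj c • conjInf ψ := by
  refine Lp.ext ?_
  filter_upwards [coeFn_conjInf (φ - c • ψ), coeFn_conjInf φ, coeFn_conjInf ψ,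
    Lp.coeFn_sub φ (c • ψ), Lp.coeFn_smul c ψ, Lp.coeFn_sub (conjInf φ) (conj c • conjInf ψ),
    Lp.coeFn_smul (conj c) (conjInf ψ)] with t h₁ h₂ h₃ h₄ h₅ h₆ h₇
  simp only [h₁, h₄, h₆, Pi.sub_apply, h₅, h₇, Pi.smul_apply, smul_eq_mul, h₂, h₃, map_sub,
    map_mul]

theorem coeff_mul_fourierLp (m : ℤ) (x : L2) (n : ℤ) :
    coeff (mul (fourierLp ⊤ m) x) n = coeff x (n - m) := by
  rw [coeff_eq_integral, coeff_eq_integral]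
  refine integral_congr_ae ?_
  filter_upwards [coeFn_mul (fourierLp ⊤ m) x, coeFn_fourierLp ⊤ m] with t h₁ h₂
  rw [h₁, h₂, show -(n - m) = -n + m by ring, fourier_add, mul_assoc]

theorem coeff_mul_zInf (x : L2) (n : ℤ) : coeff (mul zInf x) n = coeff x (n - 1) :=
  coeff_mul_fourierLp 1 x n

theorem coeff_mul_zbarInf (x : L2) (n : ℤ) : coeff (mul zbarInf x) n = coeff x (n + 1) := by
  rw [zbarInf, coeff_mul_fourierLp, sub_neg_eq_add]

theorem coeff_mul_fourierL2 (φ : Linf) (m n : ℤ) :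
    coeff (mul φ (fourierL2 m)) n = coeff (toL2 φ) (n - m) := by
  rw [coeff_eq_integral, coeff_eq_integral]
  refine integral_congr_ae ?_
  filter_upwards [coeFn_mul φ (fourierL2 m), coeFn_fourierLp 2 m, coeFn_toL2 φ] with t h₁ h₂ h₃
  rw [h₁, h₂, h₃, show -(n - m) = -n + m by ring, fourier_add]
  ring

theorem coeff_conjL2 (x : L2) (n : ℤ) : coeff (conjL2 x) n = conj (coeff x (-n)) := by
  rw [coeff_eq_integral, coeff_eq_integral, ← integral_conj]
  refine integral_congr_ae ?_
  filter_upwards [coeFn_conjL2 x] with t h₁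
  rw [h₁, neg_neg, fourier_neg, map_mul]

theorem toL2_conjInf (φ : Linf) : toL2 (conjInf φ) = conjL2 (toL2 φ) := by
  refine Lp.ext ?_
  filter_upwards [coeFn_toL2 (conjInf φ), coeFn_conjInf φ, coeFn_conjL2 (toL2 φ),
    coeFn_toL2 φ] with t h₁ h₂ h₃ h₄
  rw [h₁, h₂, h₃, h₄]

theorem mul_fourierL2_zero (φ : Linf) : mul φ (fourierL2 0) = toL2 φ := by
  refine Lp.ext ?_
  filter_upwards [coeFn_mul φ (fourierL2 0), coeFn_fourierLp 2 0, coeFn_toL2 φ] with t h₁ h₂ h₃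
  rw [h₁, h₂, h₃, fourier_zero, mul_one]

theorem Pp_add_Pm : Pp + Pm = 1 := add_sub_cancel _ _

theorem Pm_add_Pp : Pm + Pp = 1 := by rw [add_comm, Pp_add_Pm]

theorem Pp_mul_Pp : Pp * Pp = Pp := Hardy.isIdempotentElem_starProjection

theorem Pm_mul_Pm : Pm * Pm = Pm := by
  rw [Pm_eq_starProjection]
  exact Hardyᗮ.isIdempotentElem_starProjection

theorem Pp_mul_Pm : Pp * Pm = 0 := by
  rw [show Pm = 1 - Pp from rfl, mul_sub, mul_one, Pp_mul_Pp, sub_self]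

theorem Pm_mul_Pp : Pm * Pp = 0 := by
  rw [show Pm = 1 - Pp from rfl, sub_mul, one_mul, Pp_mul_Pp, sub_self]

theorem adjoint_Pp : adjoint Pp = Pp := (isSelfAdjoint_starProjection Hardy).adjoint_eq

theorem adjoint_Pm : adjoint Pm = Pm := by
  rw [Pm_eq_starProjection]
  exact (isSelfAdjoint_starProjection _).adjoint_eq

theorem rankOne_apply {E : Type*} [NormedAddCommGroup E] [InnerProductSpace ℂ E] (p q x : E) :
    rankOne p q x = ⟪q, x⟫_ℂ • p := rfl

theorem mul_rankOne_mul (X Y : L2 →L[ℂ] L2) (u v : L2) :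
    X * rankOne u v * Y = rankOne (X u) (adjoint Y v) :=
  (congrArg (· ∘L Y) (InnerProductSpace.comp_rankOne u v X)).trans
    (InnerProductSpace.rankOne_comp _ _ _)

theorem mul_zbarInf_mul_zInf : mul zbarInf * mul zInf = 1 := by
  ext1 x
  refine ext_coeff fun k => ?_
  simp only [mul_apply_eq_comp, coeff_mul_zbarInf, coeff_mul_zInf, add_sub_cancel_right,
    one_apply_eq_self]

theorem Pp_mul_zbarInf_mul_Pp : Pp * mul zbarInf * Pp = Pp * mul zbarInf := by
  ext1 x
  refine ext_coeff fun k => ?_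
  simp only [mul_apply_eq_comp, coeff_Pp, coeff_mul_zbarInf]
  split_ifs <;> first | rfl | omega

theorem Pm_sub_zbarInf_mul_Pm_mul_zInf :
    Pm - mul zbarInf * Pm * mul zInf = rankOne (fourierL2 (-1)) (fourierL2 (-1)) := by
  ext1 x
  refine ext_coeff fun k => ?_
  simp only [sub_apply, mul_apply_eq_comp, coeff_sub, coeff_Pm, coeff_mul_zbarInf, coeff_mul_zInf,
    rankOne_apply, coeff_smul, coeff_fourierL2, ← coeff_eq_inner, add_sub_cancel_right]
  split_ifs <;> (try subst_vars) <;> first | omega | norm_num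

theorem mul_zInf_mul_zbarInf : mul zInf * mul zbarInf = 1 := by
  ext1 x
  refine ext_coeff fun k => ?_
  simp only [mul_apply_eq_comp, coeff_mul_zbarInf, coeff_mul_zInf, sub_add_cancel,
    one_apply_eq_self]

theorem Pp_mul_zInf_mul_Pp : Pp * mul zInf * Pp = mul zInf * Pp := by
  ext1 x
  refine ext_coeff fun k => ?_
  simp only [mul_apply_eq_comp, coeff_Pp, coeff_mul_zInf]
  split_ifs <;> first | rfl | omega

theorem Pm_mul_zInf_mul_Pm : Pm * mul zInf * Pm = Pm * mul zInf := by
  ext1 x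
  refine ext_coeff fun k => ?_
  simp only [mul_apply_eq_comp, coeff_Pm, coeff_mul_zInf]
  split_ifs <;> first | rfl | omega

theorem Pm_mul_zbarInf_mul_Pm : Pm * mul zbarInf * Pm = mul zbarInf * Pm := by
  ext1 x
  refine ext_coeff fun k => ?_
  simp only [mul_apply_eq_comp, coeff_Pm, coeff_mul_zbarInf]
  split_ifs <;> first | rfl | omega

theorem Pm_mul_zbarInf_sub_zbarInf_mul_Pm :
    Pm * mul zbarInf - mul zbarInf * Pm = rankOne (fourierL2 (-1)) (fourierL2 0) := by
  ext1 x
  refine ext_coeff fun k => ?_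
  simp only [sub_apply, mul_apply_eq_comp, coeff_sub, coeff_Pm, coeff_mul_zbarInf,
    rankOne_apply, coeff_smul, coeff_fourierL2, ← coeff_eq_inner]
  split_ifs <;> (try subst_vars) <;> first | omega | norm_num

theorem zInf_mul_Pm_sub_Pm_mul_zInf :
    mul zInf * Pm - Pm * mul zInf = rankOne (fourierL2 0) (fourierL2 (-1)) := by
  ext1 x
  refine ext_coeff fun k => ?_
  simp only [sub_apply, mul_apply_eq_comp, coeff_sub, coeff_Pm, coeff_mul_zInf,
    rankOne_apply, coeff_smul, coeff_fourierL2, ← coeff_eq_inner]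
  split_ifs <;> (try subst_vars) <;> first | omega | norm_num

theorem Pp_sub_zInf_mul_Pp_mul_zbarInf :
    Pp - mul zInf * Pp * mul zbarInf = rankOne (fourierL2 0) (fourierL2 0) := by
  ext1 x
  refine ext_coeff fun k => ?_
  simp only [sub_apply, mul_apply_eq_comp, coeff_sub, coeff_Pp, coeff_mul_zbarInf,
    coeff_mul_zInf, rankOne_apply, coeff_smul, coeff_fourierL2, ← coeff_eq_inner,
    sub_add_cancel]
  split_ifs <;> (try subst_vars) <;> first | omega | norm_num

section Sandwich

variable {A : Type*} [Ring A]

theorem sandwich_eq {P Q α β a b R : A} (hα : P * α * P = P * α)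
    (hβ : Q * β * Q = β * Q) (ha : Commute α a) (hb : Commute β b) :
    P * α * (P * a * R * b * Q) * β * Q = P * a * (α * R * β) * b * Q :=
  calc _ = P * α * P * a * R * b * (Q * β * Q) := by simp only [mul_assoc]
    _ = P * (α * a) * R * (b * β) * Q := by rw [hα, hβ]; simp only [mul_assoc]
    _ = _ := by rw [ha.eq, ← hb.eq]; simp only [mul_assoc]

theorem sandwich_defect_eq {S : Set A} {P Q α₁ β₁ α₂ β₂ R a b c d w : A}
    (hα₁ : P * α₁ * P = P * α₁) (hα₂ : P * α₂ * P = P * α₂)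
    (hβ₁ : Q * β₁ * Q = β₁ * Q) (hβ₂ : Q * β₂ * Q = β₂ * Q) (hαβ : α₁ * β₁ = α₂ * β₂)
    (hα₁S : α₁ ∈ S.centralizer) (hβ₁S : β₁ ∈ S.centralizer) (hα₂S : α₂ ∈ S.centralizer)
    (hβ₂S : β₂ ∈ S.centralizer) (hS : ({a, b, c, d, w} : Set A) ⊆ S)
    (h : P * a * R * b * Q - P * c * R * d * Q = P * w * Q) :
    P * a * (α₁ * R * β₁ - α₂ * R * β₂) * b * Q = P * c * (α₁ * R * β₁ - α₂ * R * β₂) * d * Q := by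
  simp only [Set.insert_subset_iff, Set.singleton_subset_iff] at hS
  obtain ⟨ha, hb, hc, hd, hw⟩ := hS
  have comm {x : A} (hx : x ∈ S) (γ : A) (hγ : γ ∈ S.centralizer) : Commute γ x :=
    (hγ x hx).symm
  -- `D` kills `P * w * Q` because `α₁ * β₁ = α₂ * β₂`, and `sandwich_eq` evaluates it on `h`.
  let D (Y : A) : A := P * α₁ * Y * β₁ * Q - P * α₂ * Y * β₂ * Q
  have hD {x y : A} (R : A) (hx : ∀ γ ∈ S.centralizer, Commute γ x)
      (hy : ∀ γ ∈ S.centralizer, Commute γ y) :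
      D (P * x * R * y * Q) = P * x * (α₁ * R * β₁ - α₂ * R * β₂) * y * Q := by
    simp only [D, sandwich_eq hα₁ hβ₁ (hx _ hα₁S) (hy _ hβ₁S),
      sandwich_eq hα₂ hβ₂ (hx _ hα₂S) (hy _ hβ₂S), mul_sub, sub_mul]
  have hDw : D (P * w * 1 * 1 * Q) = 0 := by
    rw [hD 1 (comm hw) (fun γ _ => Commute.one_right γ)]
    simp only [mul_one, hαβ, sub_self, mul_zero, zero_mul]
  have hDlin : D (P * a * R * b * Q) - D (P * c * R * d * Q) =
      D (P * a * R * b * Q - P * c * R * d * Q) := by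
    simp only [D, mul_sub, sub_mul]; abel
  rw [← sub_eq_zero, ← hD R (comm ha) (comm hb), ← hD R (comm hc) (comm hd), hDlin, h, ← hDw]
  simp only [mul_one]

end Sandwich

theorem mul_Pp_mul_Pp (X : L2 →L[ℂ] L2) : X * Pp * Pp = X * Pp := by
  rw [mul_assoc, Pp_mul_Pp]

theorem mul_Pm_mul_Pm (X : L2 →L[ℂ] L2) : X * Pm * Pm = X * Pm := by
  rw [mul_assoc, Pm_mul_Pm]

theorem mul_Pp_mul_Pm (X : L2 →L[ℂ] L2) : X * Pp * Pm = 0 := by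
  rw [mul_assoc, Pp_mul_Pm, mul_zero]

theorem mul_Pm_mul_Pp (X : L2 →L[ℂ] L2) : X * Pm * Pp = 0 := by
  rw [mul_assoc, Pm_mul_Pp, mul_zero]

theorem Rop_eq (f u g v : Linf) :
    Rop f u g v = Pp * mul f * Pp + Pm * mul g * Pp + Pp * mul u * Pm + Pm * mul v * Pm := by
  simp only [Rop, ← mul_def, mul_assoc]

def cornerSpace (P Q : L2 →L[ℂ] L2) : Submodule ℂ (L2 →L[ℂ] L2) where
  carrier := {Y | ∃ w, Y = P * mul w * Q}
  add_mem' := by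
    rintro _ _ ⟨v, rfl⟩ ⟨w, rfl⟩
    exact ⟨v + w, by rw [mul_add_symbol, mul_add, add_mul]⟩
  zero_mem' := ⟨0, by rw [mul_zero_symbol, mul_zero, zero_mul]⟩
  smul_mem' := by
    rintro c _ ⟨w, rfl⟩
    exact ⟨c • w, by rw [mul_smul_symbol, mul_smul_comm, smul_mul_assoc]⟩

theorem mul_mem_cornerSpace (P Q : L2 →L[ℂ] L2) (w : Linf) : P * mul w * Q ∈ cornerSpace P Q :=
  ⟨w, rfl⟩

theorem exists_Rop_eq_iff (X : L2 →L[ℂ] L2) :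
    (∃ f u g v, X = Rop f u g v) ↔
      Pp * X * Pp ∈ cornerSpace Pp Pp ∧ Pp * X * Pm ∈ cornerSpace Pp Pm ∧
        Pm * X * Pp ∈ cornerSpace Pm Pp ∧ Pm * X * Pm ∈ cornerSpace Pm Pm := by
  constructor
  · rintro ⟨f, u, g, v, rfl⟩
    refine ⟨⟨f, ?_⟩, ⟨u, ?_⟩, ⟨g, ?_⟩, ⟨v, ?_⟩⟩ <;>
      simp [Rop_eq, mul_add, add_mul, ← mul_assoc, Pp_mul_Pp, Pm_mul_Pm, Pp_mul_Pm, Pm_mul_Pp,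
        mul_Pp_mul_Pp, mul_Pm_mul_Pm, mul_Pp_mul_Pm, mul_Pm_mul_Pp]
  · rintro ⟨⟨f, hf⟩, ⟨u, hu⟩, ⟨g, hg⟩, ⟨v, hv⟩⟩
    refine ⟨f, u, g, v, ?_⟩
    calc X = (Pp + Pm) * X * (Pp + Pm) := by rw [Pp_add_Pm, one_mul, mul_one]
      _ = Pp * X * Pp + Pm * X * Pp + Pp * X * Pm + Pm * X * Pm := by noncomm_ring
      _ = Rop f u g v := by rw [hf, hu, hg, hv, Rop_eq]

theorem corners_Rop_mul_Rop (f₁ u₁ g₁ v₁ f₂ u₂ g₂ v₂ : Linf) :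
    Pp * (Rop f₁ u₁ g₁ v₁ ∘L Rop f₂ u₂ g₂ v₂) * Pp =
        Pp * mul f₁ * Pp * mul f₂ * Pp + Pp * mul u₁ * Pm * mul g₂ * Pp ∧
      Pp * (Rop f₁ u₁ g₁ v₁ ∘L Rop f₂ u₂ g₂ v₂) * Pm =
        Pp * mul f₁ * Pp * mul u₂ * Pm + Pp * mul u₁ * Pm * mul v₂ * Pm ∧
      Pm * (Rop f₁ u₁ g₁ v₁ ∘L Rop f₂ u₂ g₂ v₂) * Pp =
        Pm * mul g₁ * Pp * mul f₂ * Pp + Pm * mul v₁ * Pm * mul g₂ * Pp ∧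
      Pm * (Rop f₁ u₁ g₁ v₁ ∘L Rop f₂ u₂ g₂ v₂) * Pm =
        Pm * mul g₁ * Pp * mul u₂ * Pm + Pm * mul v₁ * Pm * mul v₂ * Pm := by
  refine ⟨?_, ?_, ?_, ?_⟩ <;>
    simp [← mul_def, Rop_eq, mul_add, add_mul, ← mul_assoc, Pp_mul_Pp, Pm_mul_Pm, Pp_mul_Pm,
      Pm_mul_Pp, mul_Pp_mul_Pp, mul_Pm_mul_Pm, mul_Pp_mul_Pm, mul_Pm_mul_Pp]

theorem mul_proj_mul_add_mul_compl {M M' : L2 →L[ℂ] L2} (hM : M + M' = 1)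
    (P Q : L2 →L[ℂ] L2) (a b : Linf) :
    P * mul a * M * mul b * Q + P * mul a * M' * mul b * Q = P * mul (a ⊙ b) * Q := by
  rw [mul_mulInf, ← add_mul, ← add_mul, ← mul_add, hM, mul_one, mul_assoc P]

theorem add_mem_cornerSpace_iff {M M' : L2 →L[ℂ] L2} (hM : M + M' = 1)
    (P Q : L2 →L[ℂ] L2) (a b : Linf) (Y : L2 →L[ℂ] L2) :
    P * mul a * M * mul b * Q + Y ∈ cornerSpace P Q ↔
      Y - P * mul a * M' * mul b * Q ∈ cornerSpace P Q := by
  have h : P * mul a * M * mul b * Q + Y =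
      P * mul (a ⊙ b) * Q + (Y - P * mul a * M' * mul b * Q) := by
    rw [← mul_proj_mul_add_mul_compl hM]; abel
  rw [h, (cornerSpace P Q).add_mem_iff_right (mul_mem_cornerSpace P Q (a ⊙ b))]

theorem adjoint_mul_mul {Q : L2 →L[ℂ] L2} (hQ : adjoint Q = Q) (b : Linf) :
    adjoint (mul b * Q) = Q * mul (conjInf b) := by
  rw [mul_def, adjoint_comp, hQ, adjoint_mul, mul_def]

theorem mem_centralizer_range_mul (ψ : Linf) : mul ψ ∈ (Set.range mul).centralizer := by
  rintro _ ⟨φ, rfl⟩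
  exact mul_commute φ ψ

theorem rankOne_eq_of_sub_mem_cornerSpace {P Q R α₁ β₁ α₂ β₂ : L2 →L[ℂ] L2} {u v : L2}
    (hα₁ : P * α₁ * P = P * α₁) (hα₂ : P * α₂ * P = P * α₂)
    (hβ₁ : Q * β₁ * Q = β₁ * Q) (hβ₂ : Q * β₂ * Q = β₂ * Q) (hαβ : α₁ * β₁ = α₂ * β₂)
    (hα₁C : α₁ ∈ (Set.range mul).centralizer) (hβ₁C : β₁ ∈ (Set.range mul).centralizer)
    (hα₂C : α₂ ∈ (Set.range mul).centralizer) (hβ₂C : β₂ ∈ (Set.range mul).centralizer)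
    (hR : α₁ * R * β₁ - α₂ * R * β₂ = rankOne u v) (hQ : adjoint Q = Q) {a b c d : Linf}
    (h : P * mul a * R * mul b * Q - P * mul c * R * mul d * Q ∈ cornerSpace P Q) :
    rankOne (P (mul a u)) (Q (mul (conjInf b) v)) =
      rankOne (P (mul c u)) (Q (mul (conjInf d) v)) := by
  obtain ⟨w, hw⟩ := h
  have key := sandwich_defect_eq hα₁ hα₂ hβ₁ hβ₂ hαβ hα₁C hβ₁C hα₂C hβ₂C (by
    simp only [Set.insert_subset_iff, Set.mem_range_self, Set.singleton_subset_iff, and_self]) hw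
  rwa [hR, mul_assoc _ _ Q, mul_assoc _ _ Q, mul_rankOne_mul, mul_rankOne_mul,
    adjoint_mul_mul hQ, adjoint_mul_mul hQ] at key

theorem coeff_toL2 (φ : Linf) (n : ℤ) : coeff (toL2 φ) n = fourierCoeff (φ : Circ → ℂ) n := by
  simp only [coeff, fourierCoeff]
  refine integral_congr_ae ?_
  filter_upwards [coeFn_toL2 φ] with t ht
  rw [ht]

theorem toL2_sub_smul (c : ℂ) (φ ψ : Linf) : toL2 (φ - c • ψ) = toL2 φ - c • toL2 ψ := by
  refine Lp.ext ?_
  filter_upwards [coeFn_toL2 (φ - c • ψ), coeFn_toL2 φ, coeFn_toL2 ψ, Lp.coeFn_sub φ (c • ψ),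
    Lp.coeFn_smul c ψ, Lp.coeFn_sub (toL2 φ) (c • toL2 ψ),
    Lp.coeFn_smul c (toL2 ψ)] with t h₁ h₂ h₃ h₄ h₅ h₆ h₇
  simp only [h₁, h₄, h₆, Pi.sub_apply, h₅, h₇, Pi.smul_apply, h₂, h₃]

theorem toL2_mem_Hardy_iff {φ : Linf} : toL2 φ ∈ Hardy ↔ MemHinf φ :=
  forall₂_congr fun n _ => by rw [← coeff_toL2]; rfl

theorem Pm_eq_zero_iff {x : L2} : Pm x = 0 ↔ x ∈ Hardy := by
  rw [Pm_eq_starProjection, Submodule.starProjection_apply_eq_zero_iff,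
    Submodule.orthogonal_orthogonal]

theorem mI_eq_zero_iff {φ : Linf} : mI φ = 0 ↔ MemHinf φ :=
  Pm_eq_zero_iff.trans toL2_mem_Hardy_iff

theorem memHinf_sub_smul_iff {φ ψ : Linf} {c : ℂ} : MemHinf (φ - c • ψ) ↔ mI φ = c • mI ψ := by
  rw [← mI_eq_zero_iff, mI, toL2_sub_smul, map_sub, map_smul, sub_eq_zero]
  rfl

theorem mul_mem_Hardy {φ : Linf} (hφ : MemHinf φ) {x : L2} (hx : x ∈ Hardy) :
    mul φ x ∈ Hardy := by
  intro n hn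
  have hvanish (m : ℤ) :
      ⟪fourierL2 n, mul φ (fourierCoeff (x : Circ → ℂ) m • fourierL2 m)⟫_ℂ = 0 := by
    rw [map_smul, inner_smul_right, ← coeff_eq_inner, coeff_mul_fourierL2, coeff_toL2]
    rcases lt_or_ge m 0 with hm | hm
    · rw [hx m hm, zero_mul]
    · rw [hφ (n - m) (by omega), mul_zero]
  have hsum := ((innerSL ℂ (fourierL2 n)).comp (mul φ)).hasSum (hasSum_fourier_series_L2 x)
  simp only [comp_apply, innerSL_apply_apply, hvanish] at hsum
  exact (coeff_eq_inner _ n).trans (hsum.unique hasSum_zero)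

theorem Pm_mul_mul_Pp_eq_zero {φ : Linf} (hφ : MemHinf φ) : Pm * mul φ * Pp = 0 := by
  ext1 x
  exact Pm_eq_zero_iff.mpr (mul_mem_Hardy hφ (Hardy.orthogonalProjectionOnto x).2)

theorem Pp_mul_mul_Pm_eq_zero {φ : Linf} (hφ : MemHinf (conjInf φ)) : Pp * mul φ * Pm = 0 := by
  have h := congrArg adjoint (Pm_mul_mul_Pp_eq_zero hφ)
  rwa [mul_def, mul_def, adjoint_comp, adjoint_comp, adjoint_Pp, adjoint_Pm, adjoint_mul,
    conjInf_conjInf, map_zero, ← mul_def, ← mul_def, ← mul_assoc] at h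

theorem Pm_mul_mul_Pp_eq_smul {φ ψ : Linf} {c : ℂ} (h : MemHinf (φ - c • ψ)) :
    Pm * mul φ * Pp = c • (Pm * mul ψ * Pp) := by
  have h0 := Pm_mul_mul_Pp_eq_zero h
  rwa [mul_sub_symbol, mul_smul_symbol, mul_sub, sub_mul, mul_smul_comm, smul_mul_assoc,
    sub_eq_zero] at h0

theorem Pp_mul_mul_Pm_eq_smul {φ ψ : Linf} {c : ℂ}
    (h : MemHinf (conjInf φ - conj c • conjInf ψ)) :
    Pp * mul φ * Pm = c • (Pp * mul ψ * Pm) := by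
  have h0 := Pp_mul_mul_Pm_eq_zero (φ := φ - c • ψ) (by rwa [conjInf_sub_smul])
  rwa [mul_sub_symbol, mul_smul_symbol, mul_sub, sub_mul, mul_smul_comm, smul_mul_assoc,
    sub_eq_zero] at h0

theorem coeff_Vmap (x : L2) (n : ℤ) : coeff (Vmap x) n = conj (coeff x (-(n + 1))) := by
  rw [Vmap, coeff_mul_zbarInf, coeff_conjL2]

theorem Vmap_injective : Function.Injective Vmap := fun x y h =>
  ext_coeff fun n => by
    simpa [coeff_Vmap] using congrArg (fun z => conj (coeff z (-(n + 1)))) h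

theorem Vmap_smul (c : ℂ) (x : L2) : Vmap (c • x) = conj c • Vmap x :=
  ext_coeff fun n => by rw [coeff_Vmap, coeff_smul, coeff_smul, coeff_Vmap, map_mul]

theorem Vmap_eq_zero_iff {x : L2} : Vmap x = 0 ↔ x = 0 :=
  Vmap_injective.eq_iff' <| ext_coeff fun n => by simp [coeff_Vmap]

theorem Pp_mul_fourierL2_neg_one (φ : Linf) :
    Pp (mul φ (fourierL2 (-1))) = Vmap (mI (conjInf φ)) := by
  refine ext_coeff fun n => ?_
  rw [coeff_Vmap, mI, coeff_Pm, coeff_Pp, coeff_mul_fourierL2, toL2_conjInf, coeff_conjL2]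
  split_ifs <;> first | omega | simp [sub_neg_eq_add]

theorem Pm_mul_fourierL2_zero (φ : Linf) : Pm (mul φ (fourierL2 0)) = mI φ := by
  rw [mul_fourierL2_zero, mI]

theorem rankOne_eq_of_sub_mem_cornerSpace_Pp_Pp {a b c d : Linf}
    (h : Pp * mul a * Pm * mul b * Pp - Pp * mul c * Pm * mul d * Pp ∈ cornerSpace Pp Pp) :
    rankOne (Vmap (mI (conjInf a))) (Vmap (mI b)) =
      rankOne (Vmap (mI (conjInf c))) (Vmap (mI d)) := by
  have := rankOne_eq_of_sub_mem_cornerSpace (α₁ := 1) (β₁ := 1) (by rw [mul_one, Pp_mul_Pp])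
    Pp_mul_zbarInf_mul_Pp (by rw [mul_one, one_mul, Pp_mul_Pp]) Pp_mul_zInf_mul_Pp
    (by rw [mul_one, mul_zbarInf_mul_zInf]) Set.one_mem_centralizer Set.one_mem_centralizer
    (mem_centralizer_range_mul _) (mem_centralizer_range_mul _)
    (by rw [mul_one, one_mul, Pm_sub_zbarInf_mul_Pm_mul_zInf]) adjoint_Pp h
  simpa [Pp_mul_fourierL2_neg_one, conjInf_conjInf] using this

theorem rankOne_eq_of_sub_mem_cornerSpace_Pp_Pm {a b c d : Linf}
    (h : Pp * mul a * Pm * mul b * Pm - Pp * mul c * Pm * mul d * Pm ∈ cornerSpace Pp Pm) :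
    rankOne (Vmap (mI (conjInf a))) (mI (conjInf b)) =
      rankOne (Vmap (mI (conjInf c))) (mI (conjInf d)) := by
  have := rankOne_eq_of_sub_mem_cornerSpace (α₁ := 1) (β₂ := 1) (by rw [mul_one, Pp_mul_Pp])
    Pp_mul_zbarInf_mul_Pp Pm_mul_zbarInf_mul_Pm (by rw [mul_one, one_mul, Pm_mul_Pm])
    (by rw [one_mul, mul_one]) Set.one_mem_centralizer (mem_centralizer_range_mul _)
    (mem_centralizer_range_mul _) Set.one_mem_centralizer
    (by rw [one_mul, mul_one, Pm_mul_zbarInf_sub_zbarInf_mul_Pm]) adjoint_Pm h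
  simpa [Pp_mul_fourierL2_neg_one, Pm_mul_fourierL2_zero] using this

theorem rankOne_eq_of_sub_mem_cornerSpace_Pm_Pp {a b c d : Linf}
    (h : Pm * mul a * Pm * mul b * Pp - Pm * mul c * Pm * mul d * Pp ∈ cornerSpace Pm Pp) :
    rankOne (mI a) (Vmap (mI b)) = rankOne (mI c) (Vmap (mI d)) := by
  have := rankOne_eq_of_sub_mem_cornerSpace (β₁ := 1) (α₂ := 1) Pm_mul_zInf_mul_Pm
    (by rw [mul_one, Pm_mul_Pm]) (by rw [mul_one, one_mul, Pp_mul_Pp]) Pp_mul_zInf_mul_Pp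
    (by rw [one_mul, mul_one]) (mem_centralizer_range_mul _) Set.one_mem_centralizer
    Set.one_mem_centralizer (mem_centralizer_range_mul _)
    (by rw [one_mul, mul_one, zInf_mul_Pm_sub_Pm_mul_zInf]) adjoint_Pp h
  simpa [Pp_mul_fourierL2_neg_one, Pm_mul_fourierL2_zero, conjInf_conjInf] using this

theorem rankOne_eq_of_sub_mem_cornerSpace_Pm_Pm {a b c d : Linf}
    (h : Pm * mul a * Pp * mul b * Pm - Pm * mul c * Pp * mul d * Pm ∈ cornerSpace Pm Pm) :
    rankOne (mI a) (mI (conjInf b)) = rankOne (mI c) (mI (conjInf d)) := by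
  have := rankOne_eq_of_sub_mem_cornerSpace (α₁ := 1) (β₁ := 1) (by rw [mul_one, Pm_mul_Pm])
    Pm_mul_zInf_mul_Pm (by rw [mul_one, one_mul, Pm_mul_Pm]) Pm_mul_zbarInf_mul_Pm
    (by rw [mul_one, mul_zInf_mul_zbarInf]) Set.one_mem_centralizer Set.one_mem_centralizer
    (mem_centralizer_range_mul _) (mem_centralizer_range_mul _)
    (by rw [mul_one, one_mul, Pp_sub_zInf_mul_Pp_mul_zbarInf]) adjoint_Pm h
  simpa [Pm_mul_fourierL2_zero] using this

theorem rankOne_eqs_of_exists_Rop_eq {f₁ u₁ g₁ v₁ f₂ u₂ g₂ v₂ : Linf}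
    (h : ∃ f u g v, Rop f₁ u₁ g₁ v₁ ∘L Rop f₂ u₂ g₂ v₂ = Rop f u g v) :
    rankOne (Vmap (mI (conjInf f₁))) (Vmap (mI f₂)) =
        rankOne (Vmap (mI (conjInf u₁))) (Vmap (mI g₂)) ∧
      rankOne (Vmap (mI (conjInf f₁))) (mI (conjInf u₂)) =
        rankOne (Vmap (mI (conjInf u₁))) (mI (conjInf v₂)) ∧
      rankOne (mI g₁) (Vmap (mI f₂)) = rankOne (mI v₁) (Vmap (mI g₂)) ∧
      rankOne (mI g₁) (mI (conjInf u₂)) = rankOne (mI v₁) (mI (conjInf v₂)) := by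
  obtain ⟨hpp, hpq, hqp, hqq⟩ := (exists_Rop_eq_iff _).mp h
  obtain ⟨epp, epq, eqp, eqq⟩ := corners_Rop_mul_Rop f₁ u₁ g₁ v₁ f₂ u₂ g₂ v₂
  rw [epp, add_mem_cornerSpace_iff Pp_add_Pm] at hpp
  rw [epq, add_mem_cornerSpace_iff Pp_add_Pm] at hpq
  rw [eqp, add_mem_cornerSpace_iff Pp_add_Pm] at hqp
  rw [eqq, add_comm, add_mem_cornerSpace_iff Pm_add_Pp] at hqq
  exact ⟨(rankOne_eq_of_sub_mem_cornerSpace_Pp_Pp hpp).symm,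
    (rankOne_eq_of_sub_mem_cornerSpace_Pp_Pm hpq).symm,
    (rankOne_eq_of_sub_mem_cornerSpace_Pm_Pp hqp).symm, rankOne_eq_of_sub_mem_cornerSpace_Pm_Pm hqq⟩

theorem rankOne_pair_eq_rankOne_pair {p₁ p₂ q₁ q₂ p₁' p₂' q₁' q₂' : L2}
    (h₁₁ : rankOne p₁ q₁ = rankOne p₁' q₁') (h₁₂ : rankOne p₁ q₂ = rankOne p₁' q₂')
    (h₂₁ : rankOne p₂ q₁ = rankOne p₂' q₁') (h₂₂ : rankOne p₂ q₂ = rankOne p₂' q₂') :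
    rankOne (pair p₁ p₂) (pair q₁ q₂) = rankOne (pair p₁' p₂') (pair q₁' q₂') := by
  have apply_pair (a₁ a₂ b₁ b₂ : L2) (v : L2sq) : rankOne (pair a₁ a₂) (pair b₁ b₂) v =
      pair (rankOne a₁ b₁ v.fst + rankOne a₁ b₂ v.snd)
        (rankOne a₂ b₁ v.fst + rankOne a₂ b₂ v.snd) := by
    simp only [rankOne_apply, pair, WithLp.prod_inner_apply, add_smul]
    rfl
  ext1 v
  rw [apply_pair, apply_pair, h₁₁, h₁₂, h₂₁, h₂₂]

section RankOne

variable {E : Type*} [NormedAddCommGroup E] [InnerProductSpace ℂ E]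

theorem rankOne_smul_smul (a b : ℂ) (x y : E) :
    rankOne (a • x) (b • y) = (a * conj b) • rankOne x y := by
  ext1 z
  simp only [rankOne_apply, inner_smul_left, smul_apply, smul_smul]
  ring_nf

theorem eq_zero_or_exists_of_rankOne_eq {p q p' q' : E} (h : rankOne p q = rankOne p' q') :
    ((p = 0 ∨ q = 0) ∧ (p' = 0 ∨ q' = 0)) ∨
      ∃ c : ℂ, c ≠ 0 ∧ p = c • p' ∧ q' = conj c • q := by
  have hzero {x y : E} : rankOne x y = 0 ↔ x = 0 ∨ y = 0 := InnerProductSpace.rankOne_eq_zero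
  by_cases hpq : p = 0 ∨ q = 0
  · exact Or.inl ⟨hpq, hzero.mp (h ▸ hzero.mpr hpq)⟩
  push Not at hpq
  obtain ⟨α, β, hα, -, rfl, rfl⟩ := InnerProductSpace.exists_of_rankOne_eq_rankOne hpq.1 hpq.2 h
  have hne : rankOne p' q' ≠ 0 := fun h0 => by
    rcases hzero.mp h0 with rfl | rfl <;> simp at hpq
  have hscalar : α * conj (α * β) = 1 := by
    refine smul_left_injective ℂ hne ?_
    simpa only [one_smul, rankOne_smul_smul] using h
  refine Or.inr ⟨α, hα, rfl, ?_⟩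
  rw [smul_smul, ← conj_conj (α * β), ← map_mul, hscalar, map_one, one_smul]

end RankOne

theorem pair_Vmap_mI_eq_zero_iff (φ ψ : Linf) :
    pair (Vmap (mI φ)) (mI ψ) = 0 ↔ MemHinf φ ∧ MemHinf ψ := by
  rw [← mI_eq_zero_iff, ← mI_eq_zero_iff, ← Vmap_eq_zero_iff]
  simp [pair]

theorem smul_pair (c : ℂ) (x y : L2) : c • pair x y = pair (c • x) (c • y) := rfl

theorem pair_Vmap_mI_eq_smul_iff (φ ψ φ' ψ' : Linf) (c : ℂ) :
    pair (Vmap (mI φ)) (mI ψ) = c • pair (Vmap (mI φ')) (mI ψ') ↔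
      MemHinf (φ - conj c • φ') ∧ MemHinf (ψ - c • ψ') := by
  rw [memHinf_sub_smul_iff, memHinf_sub_smul_iff, ← Vmap_injective.eq_iff, Vmap_smul, conj_conj,
    smul_pair]
  simp [pair]

theorem mul_mul_mul_eq_zero_of_left {P R : L2 →L[ℂ] L2} {a : Linf} (h : P * mul a * R = 0)
    (b : Linf) (Q : L2 →L[ℂ] L2) : P * mul a * R * mul b * Q = 0 := by
  rw [h, zero_mul, zero_mul]

theorem mul_mul_mul_eq_zero_of_right {R Q : L2 →L[ℂ] L2} {b : Linf} (h : R * mul b * Q = 0)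
    (P : L2 →L[ℂ] L2) (a : Linf) : P * mul a * R * mul b * Q = 0 := by
  rw [mul_assoc _ _ Q, mul_assoc _ R, ← mul_assoc R, h, mul_zero]

theorem mul_mul_mul_eq_smul_of_left {P R : L2 →L[ℂ] L2} {a a' : Linf} {c : ℂ}
    (h : P * mul a * R = c • (P * mul a' * R)) (b : Linf) (Q : L2 →L[ℂ] L2) :
    P * mul a * R * mul b * Q = c • (P * mul a' * R * mul b * Q) := by
  rw [h, smul_mul_assoc, smul_mul_assoc]

theorem mul_mul_mul_eq_smul_of_right {R Q : L2 →L[ℂ] L2} {b b' : Linf} {c : ℂ}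
    (h : R * mul b * Q = c • (R * mul b' * Q)) (P : L2 →L[ℂ] L2) (a : Linf) :
    P * mul a * R * mul b * Q = c • (P * mul a * R * mul b' * Q) := by
  simp only [mul_assoc] at h ⊢
  rw [h, mul_smul_comm, mul_smul_comm]

theorem mem_cornerSpace_of_compl_eq_zero {P Q M M' : L2 →L[ℂ] L2} (hM : M + M' = 1)
    {a b : Linf} (h : P * mul a * M' * mul b * Q = 0) :
    P * mul a * M * mul b * Q ∈ cornerSpace P Q := by
  simpa [h] using (add_mem_cornerSpace_iff hM P Q a b 0).mpr (by simp [h])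

/-- The four terms of `R_{H₁} R_{H₂}` passing through the middle projection `M`; condition (3.1)
is the hypothesis below for `M = P₊` and for `M = P₋`. -/
theorem mem_cornerSpace_of_hankel_eq_zero {M M' : L2 →L[ℂ] L2} (hM : M + M' = 1)
    {a b c d : Linf}
    (h : (M * mul a * M' = 0 ∧ M' * mul b * M = 0) ∨ (M' * mul c * M = 0 ∧ M * mul d * M' = 0)) :
    M * mul a * M * mul c * M ∈ cornerSpace M M ∧ M * mul a * M * mul d * M' ∈ cornerSpace M M' ∧
      M' * mul b * M * mul c * M ∈ cornerSpace M' M ∧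
      M' * mul b * M * mul d * M' ∈ cornerSpace M' M' := by
  have mem_of_eq_zero {Y P Q : L2 →L[ℂ] L2} (hY : Y = 0) : Y ∈ cornerSpace P Q := hY ▸ zero_mem _
  rcases h with ⟨ha, hb⟩ | ⟨hc, hd⟩
  · exact ⟨mem_cornerSpace_of_compl_eq_zero hM (mul_mul_mul_eq_zero_of_left ha _ _),
      mem_cornerSpace_of_compl_eq_zero hM (mul_mul_mul_eq_zero_of_left ha _ _),
      mem_of_eq_zero (mul_mul_mul_eq_zero_of_left hb _ _),
      mem_of_eq_zero (mul_mul_mul_eq_zero_of_left hb _ _)⟩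
  · exact ⟨mem_cornerSpace_of_compl_eq_zero hM (mul_mul_mul_eq_zero_of_right hc _ _),
      mem_of_eq_zero (mul_mul_mul_eq_zero_of_right hd _ _),
      mem_cornerSpace_of_compl_eq_zero hM (mul_mul_mul_eq_zero_of_right hc _ _),
      mem_of_eq_zero (mul_mul_mul_eq_zero_of_right hd _ _)⟩

theorem exists_Rop_eq_of_memHinf {f₁ u₁ g₁ v₁ f₂ u₂ g₂ v₂ : Linf}
    (h₁ : (MemHinf (conjInf f₁) ∧ MemHinf g₁) ∨ (MemHinf f₂ ∧ MemHinf (conjInf u₂)))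
    (h₂ : (MemHinf (conjInf u₁) ∧ MemHinf v₁) ∨ (MemHinf g₂ ∧ MemHinf (conjInf v₂))) :
    ∃ f u g v, Rop f₁ u₁ g₁ v₁ ∘L Rop f₂ u₂ g₂ v₂ = Rop f u g v := by
  obtain ⟨A₁, A₂, A₃, A₄⟩ := mem_cornerSpace_of_hankel_eq_zero Pp_add_Pm (a := f₁) (b := g₁)
    (c := f₂) (d := u₂) <| h₁.imp
      (fun h => ⟨Pp_mul_mul_Pm_eq_zero h.1, Pm_mul_mul_Pp_eq_zero h.2⟩)
      (fun h => ⟨Pm_mul_mul_Pp_eq_zero h.1, Pp_mul_mul_Pm_eq_zero h.2⟩)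
  obtain ⟨B₁, B₂, B₃, B₄⟩ := mem_cornerSpace_of_hankel_eq_zero Pm_add_Pp (a := v₁) (b := u₁)
    (c := v₂) (d := g₂) <| h₂.imp
      (fun h => ⟨Pm_mul_mul_Pp_eq_zero h.2, Pp_mul_mul_Pm_eq_zero h.1⟩)
      (fun h => ⟨Pp_mul_mul_Pm_eq_zero h.2, Pm_mul_mul_Pp_eq_zero h.1⟩)
  obtain ⟨epp, epq, eqp, eqq⟩ := corners_Rop_mul_Rop f₁ u₁ g₁ v₁ f₂ u₂ g₂ v₂
  refine (exists_Rop_eq_iff _).mpr ⟨?_, ?_, ?_, ?_⟩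
  · rw [epp]; exact add_mem A₁ B₄
  · rw [epq]; exact add_mem A₂ B₃
  · rw [eqp]; exact add_mem A₃ B₂
  · rw [eqq]; exact add_mem A₄ B₁

theorem exists_Rop_eq_of_memHinf_sub_smul {f₁ u₁ g₁ v₁ f₂ u₂ g₂ v₂ : Linf} {c : ℂ}
    (h₁ : MemHinf (conjInf f₁ - conj c • conjInf u₁)) (h₂ : MemHinf (g₁ - c • v₁))
    (h₃ : MemHinf (g₂ - c • f₂)) (h₄ : MemHinf (conjInf v₂ - conj c • conjInf u₂)) :
    ∃ f u g v, Rop f₁ u₁ g₁ v₁ ∘L Rop f₂ u₂ g₂ v₂ = Rop f u g v := by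
  have l₁ := Pp_mul_mul_Pm_eq_smul h₁
  have l₂ := Pm_mul_mul_Pp_eq_smul h₂
  have l₃ := Pm_mul_mul_Pp_eq_smul h₃
  obtain ⟨epp, epq, eqp, eqq⟩ := corners_Rop_mul_Rop f₁ u₁ g₁ v₁ f₂ u₂ g₂ v₂
  refine (exists_Rop_eq_iff _).mpr ⟨?_, ?_, ?_, ?_⟩
  · rw [epp, mul_mul_mul_eq_smul_of_right l₃, ← mul_mul_mul_eq_smul_of_left l₁,
      mul_proj_mul_add_mul_compl Pp_add_Pm]
    exact mul_mem_cornerSpace _ _ _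
  · have hv : Pp * mul (v₂ - c • u₂) * Pm = 0 :=
      Pp_mul_mul_Pm_eq_zero (by rwa [conjInf_sub_smul])
    have e : Pp * mul u₁ * Pm * mul v₂ * Pm - Pp * mul f₁ * Pm * mul u₂ * Pm =
        Pp * mul u₁ * Pm * mul (v₂ - c • u₂) * Pm := by
      rw [mul_mul_mul_eq_smul_of_left l₁, mul_sub_symbol, mul_smul_symbol]
      simp only [mul_sub, sub_mul, mul_smul_comm, smul_mul_assoc]
    rw [epq, add_mem_cornerSpace_iff Pp_add_Pm, e]
    exact mem_cornerSpace_of_compl_eq_zero Pm_add_Pp (mul_mul_mul_eq_zero_of_right hv _ _)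
  · rw [eqp, mul_mul_mul_eq_smul_of_left l₂, mul_mul_mul_eq_smul_of_right l₃, ← smul_add,
      mul_proj_mul_add_mul_compl Pp_add_Pm]
    exact Submodule.smul_mem _ _ (mul_mem_cornerSpace _ _ _)
  · rw [eqq, mul_mul_mul_eq_smul_of_left l₂,
      ← mul_mul_mul_eq_smul_of_right (Pp_mul_mul_Pm_eq_smul h₄),
      mul_proj_mul_add_mul_compl Pp_add_Pm]
    exact mul_mem_cornerSpace _ _ _

/-- (Semi-commutativity of GSIOs.) For symbols `H₁ = [[f₁,u₁],[g₁,v₁]]`,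
`H₂ = [[f₂,u₂],[g₂,v₂]]` in `L^∞_{2×2}`, the following are equivalent:
(1) `R_{H₁}R_{H₂}` is a GSIO; (2) a rank-one operator identity on `L² ⊕ L²`;
(3) the symbol conditions (3.1) or (3.2). -/
theorem statement4 (f₁ u₁ g₁ v₁ f₂ u₂ g₂ v₂ : Linf) :
    List.TFAE
      [∃ f u g v : Linf, Rop f₁ u₁ g₁ v₁ ∘L Rop f₂ u₂ g₂ v₂ = Rop f u g v,
       rankOne (pair (Vmap (mI (conjInf f₁))) (mI g₁)) (pair (Vmap (mI f₂)) (mI (conjInf u₂))) =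
         rankOne (pair (Vmap (mI (conjInf u₁))) (mI v₁)) (pair (Vmap (mI g₂)) (mI (conjInf v₂))),
       ((((MemHinf (conjInf f₁) ∧ MemHinf g₁) ∨ (MemHinf f₂ ∧ MemHinf (conjInf u₂))) ∧
           ((MemHinf (conjInf u₁) ∧ MemHinf v₁) ∨ (MemHinf g₂ ∧ MemHinf (conjInf v₂)))) ∨
         (∃ lam : ℂ, lam ≠ 0 ∧
           MemHinf (conjInf f₁ - conj lam • conjInf u₁) ∧ MemHinf (g₁ - lam • v₁) ∧
           MemHinf (g₂ - lam • f₂) ∧ MemHinf (conjInf v₂ - conj lam • conjInf u₂)))] := by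
  tfae_have 1 → 2 := fun h => by
    obtain ⟨h₁₁, h₁₂, h₂₁, h₂₂⟩ := rankOne_eqs_of_exists_Rop_eq h
    exact rankOne_pair_eq_rankOne_pair h₁₁ h₁₂ h₂₁ h₂₂
  tfae_have 2 → 3 := fun h => by
    rcases eq_zero_or_exists_of_rankOne_eq h with ⟨h₁, h₂⟩ | ⟨c, hc, hp, hq⟩
    · simp only [pair_Vmap_mI_eq_zero_iff] at h₁ h₂
      exact Or.inl ⟨h₁, h₂⟩
    · rw [pair_Vmap_mI_eq_smul_iff] at hp hq
      rw [conj_conj] at hq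
      exact Or.inr ⟨c, hc, hp.1, hp.2, hq.1, hq.2⟩
  tfae_have 3 → 1
  | Or.inl ⟨h₁, h₂⟩ => exists_Rop_eq_of_memHinf h₁ h₂
  | Or.inr ⟨_, _, h₁, h₂, h₃, h₄⟩ => exists_Rop_eq_of_memHinf_sub_smul h₁ h₂ h₃ h₄
  tfae_finish

end GSIO
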